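/- arXiv:2107.06220 — 2 statements merged into one kernel-verified Lean document; each statement's English description precedes it below -/
import Mathlib

section
/- All entries of the inverse of the Cartan matrix of an irreducible crystallographic root system are nonnegative (indeed positive). -/
open scoped RealInnerProductSpace BigOperators

noncomputable section

abbrev V (n : ℕ) := EuclideanSpace ℝ (Fin n)

/-- The coroot `α^∨ = 2α/(α,α)`. -/
noncomputable def covec {n : ℕ} (α : V n) : V n := (2 / ⟪α, α⟫) • α

/-- `Φ` is an irreducible crystallographic root system in `ℝⁿ`. -/
structure IsCrystRS {n : ℕ} (Φ : Finset (V n)) : Prop where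
  ne_zero : ∀ α ∈ Φ, α ≠ 0
  span_top : Submodule.span ℝ (Φ : Set (V n)) = ⊤
  neg_mem : ∀ α ∈ Φ, -α ∈ Φ
  refl_mem : ∀ α ∈ Φ, ∀ β ∈ Φ, β - ⟪β, covec α⟫ • α ∈ Φ
  cryst : ∀ α ∈ Φ, ∀ β ∈ Φ, ∃ m : ℤ, ⟪β, covec α⟫ = (m : ℝ)
  irreducible : ∀ s ⊆ (Φ : Set (V n)),
    (∀ α ∈ s, ∀ β ∈ (Φ : Set (V n)) \ s, ⟪α, β⟫ = 0) → s = ∅ ∨ s = (Φ : Set (V n))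

/-- `Δ` is a simple system for the root system `Φ`. -/
structure IsSimpleSys {n : ℕ} (Φ Δ : Finset (V n)) : Prop where
  subset : Δ ⊆ Φ
  indep : LinearIndependent ℝ (fun a : (Δ : Set (V n)) => (a : V n))
  decomp : ∀ α ∈ Φ,
    (∃ c : V n → ℝ, (∀ d ∈ Δ, 0 ≤ c d) ∧ α = ∑ d ∈ Δ, c d • d) ∨
    (∃ c : V n → ℝ, (∀ d ∈ Δ, 0 ≤ c d) ∧ α = -∑ d ∈ Δ, c d • d)

/-- `α` is a positive root w.r.t. the simple system `Δ`. -/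
def IsPosRoot {n : ℕ} (Δ : Finset (V n)) (α : V n) : Prop :=
  ∃ c : V n → ℝ, (∀ d ∈ Δ, 0 ≤ c d) ∧ α = ∑ d ∈ Δ, c d • d

/-- The affine Weyl group `W_a`, generated by all affine reflections
`s_{α,k}(x) = x - (⟨x,α^∨⟩ - k)α`, as a subgroup of the isometry group of `ℝⁿ`. -/
noncomputable def affineWeyl {n : ℕ} (Φ : Finset (V n)) : Subgroup (V n ≃ᵢ V n) :=
  Subgroup.closure {f | ∃ α ∈ Φ, ∃ k : ℤ, ∀ x, f x = x - (⟪x, covec α⟫ - (k : ℝ)) • α}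

/-- The finite Weyl group `W`, generated by the linear reflections `s_{α,0}`. -/
noncomputable def finiteWeyl {n : ℕ} (Φ : Finset (V n)) : Subgroup (V n ≃ᵢ V n) :=
  Subgroup.closure {f | ∃ α ∈ Φ, ∀ x, f x = x - ⟪x, covec α⟫ • α}

instance isomAction {n : ℕ} : MulAction (V n ≃ᵢ V n) (V n) where
  smul f x := f x
  one_smul _ := rfl
  mul_smul _ _ _ := rfl

/-!
Write the Cartan matrix as `C = D G` with `D = diag (2 / ⟪αᵢ, αᵢ⟫)` and `G` the Gram matrix of
the simple roots; it suffices that `G⁻¹` is entrywise positive. `G` is positive definite and its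
off-diagonal entries are `≤ 0`, since `⟪αᵢ, αⱼ⟫ > 0` would make `αⱼ - αᵢ` a root with coefficients
of both signs. For a column `x` of `G⁻¹` we have `G x ≥ 0`; pairing with the negative part `x⁻`
gives `⟪x⁻, G x⁻⟫ ≤ 0`, so `x ≥ 0`, and the zero set of `x` is orthogonal to its complement.
Irreducibility rules out such a splitting `S ⊔ Sᶜ` of the simple roots: a positive root whose
support meets both parts can be stripped, one simple root of `S` at a time, down to its part `v`
on `Sᶜ`, which is then a root, and reflecting the original root in `v` gives a root of mixed sign.
-/

open Finset

namespace Matrix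

variable {ι : Type*} [Fintype ι] {A : Matrix ι ι ℝ}

theorem PosDef.nonneg_of_mulVec_nonneg (hA : A.PosDef) (hoff : ∀ i j, i ≠ j → A i j ≤ 0)
    {x : ι → ℝ} (hAx : 0 ≤ A *ᵥ x) : 0 ≤ x := by
  suffices hneg : x⁻ = 0 by
    rw [← posPart_sub_negPart x, hneg, sub_zero]
    exact posPart_nonneg x
  have hcross : x⁻ ⬝ᵥ (A *ᵥ x⁺) ≤ 0 := by
    refine sum_nonpos fun a _ => ?_
    rw [mulVec, dotProduct, mul_sum]
    refine sum_nonpos fun k _ => ?_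
    obtain rfl | hak := eq_or_ne a k
    · rcases le_total (x a) 0 with h | h
      · simp [posPart_eq_zero.2 h]
      · simp [negPart_eq_zero.2 h]
    · exact mul_nonpos_of_nonneg_of_nonpos (negPart_nonneg _)
        (mul_nonpos_of_nonpos_of_nonneg (hoff a k hak) (posPart_nonneg _))
  have hsplit : x⁻ ⬝ᵥ (A *ᵥ x) = x⁻ ⬝ᵥ (A *ᵥ x⁺) - x⁻ ⬝ᵥ (A *ᵥ x⁻) := by
    rw [← dotProduct_sub, ← mulVec_sub, posPart_sub_negPart]
  by_contra hne
  have hpos : 0 < x⁻ ⬝ᵥ (A *ᵥ x⁻) := by simpa using hA.dotProduct_mulVec_pos hne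
  have := dotProduct_nonneg_of_nonneg (negPart_nonneg x) hAx
  linarith

theorem apply_eq_zero_of_mulVec_nonneg (hoff : ∀ i j, i ≠ j → A i j ≤ 0) {x : ι → ℝ}
    (hx : 0 ≤ x) (hAx : 0 ≤ A *ᵥ x) {i k : ι} (hi : x i = 0) (hk : x k ≠ 0) : A i k = 0 := by
  have hterm : ∀ m ∈ univ, A i m * x m ≤ 0 := fun m _ => by
    obtain rfl | him := eq_or_ne i m
    · rw [hi, mul_zero]
    · exact mul_nonpos_of_nonpos_of_nonneg (hoff i m him) (hx m)
  have hsum : ∑ m, A i m * x m = 0 := le_antisymm (sum_nonpos hterm) (hAx i)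
  exact (mul_eq_zero.1 ((sum_eq_zero_iff_of_nonpos hterm).1 hsum k (mem_univ k))).resolve_right hk

theorem PosDef.inv_apply_pos [DecidableEq ι] (hA : A.PosDef) (hoff : ∀ i j, i ≠ j → A i j ≤ 0)
    (hirr : ∀ S : Finset ι, (∀ i ∈ S, ∀ j ∉ S, A i j = 0) → S = ∅ ∨ S = univ) (i j : ι) :
    0 < A⁻¹ i j := by
  set x : ι → ℝ := fun k => A⁻¹ k j
  have hAx : A *ᵥ x = Pi.single j 1 := by
    have : x = A⁻¹ *ᵥ Pi.single j 1 := by ext k; simp [x, mulVec_single]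
    rw [this, mulVec_mulVec, mul_nonsing_inv A ((isUnit_iff_isUnit_det A).1 hA.isUnit),
      one_mulVec]
  have hAx_nonneg : 0 ≤ A *ᵥ x := hAx ▸ Pi.single_nonneg.2 zero_le_one
  have hx := hA.nonneg_of_mulVec_nonneg hoff hAx_nonneg
  rcases hirr {k | x k = 0} fun a ha k hk =>
      apply_eq_zero_of_mulVec_nonneg hoff hx hAx_nonneg (by simpa using ha) (by simpa using hk)
    with hempty | huniv
  · exact (hx i).lt_of_ne' fun h => eq_empty_iff_forall_notMem.1 hempty i (by simpa using h)
  · have hx0 : x = 0 := funext fun k => by simpa using eq_univ_iff_forall.1 huniv k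
    simpa [hx0] using congrFun hAx j

end Matrix

namespace IsCrystRS

variable {n : ℕ} {Φ : Finset (V n)}

theorem inner_covec_right (α β : V n) : ⟪β, covec α⟫ = 2 / ⟪α, α⟫ * ⟪α, β⟫ := by
  rw [covec, real_inner_smul_right, real_inner_comm α β]

theorem sub_mem_of_inner_pos (hΦ : IsCrystRS Φ) {α β : V n} (hα : α ∈ Φ) (hβ : β ∈ Φ)
    (hpos : 0 < ⟪α, β⟫) (hlt : ⟪α, β⟫ < ‖α‖ * ‖β‖) : β - α ∈ Φ := by
  obtain ⟨p, hp⟩ := hΦ.cryst α hα β hβ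
  obtain ⟨q, hq⟩ := hΦ.cryst β hβ α hα
  have hαα : 0 < ⟪α, α⟫ := real_inner_self_pos.2 (hΦ.ne_zero α hα)
  have hββ : 0 < ⟪β, β⟫ := real_inner_self_pos.2 (hΦ.ne_zero β hβ)
  have hpα : (p : ℝ) * ⟪α, α⟫ = 2 * ⟪α, β⟫ := by rw [← hp, inner_covec_right]; field_simp
  have hqβ : (q : ℝ) * ⟪β, β⟫ = 2 * ⟪α, β⟫ := by
    rw [← hq, inner_covec_right, real_inner_comm α β]; field_simp
  have hcs : ⟪α, β⟫ * ⟪α, β⟫ < ⟪α, α⟫ * ⟪β, β⟫ := by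
    rw [real_inner_self_eq_norm_mul_norm, real_inner_self_eq_norm_mul_norm]
    nlinarith
  have hp0 : (0 : ℝ) < p := pos_of_mul_pos_left (hpα ▸ by positivity) hαα.le
  have hq0 : (0 : ℝ) < q := pos_of_mul_pos_left (hqβ ▸ by positivity) hββ.le
  have hpq : (p : ℝ) * q < 4 := by
    refine lt_of_mul_lt_mul_right ?_ (mul_pos hαα hββ).le
    calc (p : ℝ) * q * (⟪α, α⟫ * ⟪β, β⟫) = 4 * (⟪α, β⟫ * ⟪α, β⟫) := by
          linear_combination (q * ⟪β, β⟫) * hpα + (2 * ⟪α, β⟫) * hqβ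
      _ < 4 * (⟪α, α⟫ * ⟪β, β⟫) := by linarith
  have hp1 : 1 ≤ p := by exact_mod_cast hp0
  have hq1 : 1 ≤ q := by exact_mod_cast hq0
  have hpq4 : p * q < 4 := by exact_mod_cast hpq
  have hone : p = 1 ∨ q = 1 := by
    by_contra! h
    nlinarith [(by omega : 2 ≤ p), (by omega : 2 ≤ q)]
  rcases hone with rfl | rfl
  · simpa [hp] using hΦ.refl_mem α hα β hβ
  · simpa [hq] using hΦ.neg_mem _ (hΦ.refl_mem β hβ α hα)

end IsCrystRS

structure IsSimpleBasis {n N : ℕ} (Φ : Finset (V n)) (b : Fin N → V n) : Prop where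
  mem : ∀ i, b i ∈ Φ
  linearIndependent : LinearIndependent ℝ b
  exists_eq_sum : ∀ α ∈ Φ, ∃ c : Fin N → ℝ, α = ∑ i, c i • b i
  nonneg_or_nonpos : ∀ c : Fin N → ℝ, ∑ i, c i • b i ∈ Φ → 0 ≤ c ∨ c ≤ 0

theorem IsSimpleSys.isSimpleBasis {n N : ℕ} [DecidableEq (V n)] {Φ Δ : Finset (V n)}
    {b : Fin N → V n} (hΔ : IsSimpleSys Φ Δ) (hinj : Function.Injective b)
    (hbΔ : image b univ = Δ) : IsSimpleBasis Φ b := by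
  have hmemΔ (i : Fin N) : b i ∈ Δ := hbΔ ▸ mem_image_of_mem b (mem_univ i)
  have hsum (c : V n → ℝ) : ∑ d ∈ Δ, c d • d = ∑ i, c (b i) • b i := by
    rw [← hbΔ, sum_image fun x _ y _ h => hinj h]
  have hli : LinearIndependent ℝ b :=
    hΔ.indep.comp (fun i => ⟨b i, hmemΔ i⟩) fun i j h => hinj (congrArg Subtype.val h)
  have hdecomp (α : V n) (hα : α ∈ Φ) : ∃ c : Fin N → ℝ,
      (0 ≤ c ∧ α = ∑ i, c i • b i) ∨ (0 ≤ c ∧ α = -∑ i, c i • b i) := by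
    rcases hΔ.decomp α hα with ⟨c, hc, rfl⟩ | ⟨c, hc, rfl⟩
    · exact ⟨c ∘ b, .inl ⟨fun i => hc _ (hmemΔ i), hsum c⟩⟩
    · exact ⟨c ∘ b, .inr ⟨fun i => hc _ (hmemΔ i), by rw [hsum c]; rfl⟩⟩
  refine ⟨fun i => hΔ.subset (hmemΔ i), hli, fun α hα => ?_, fun c hc => ?_⟩
  · obtain ⟨e, ⟨-, he⟩ | ⟨-, he⟩⟩ := hdecomp α hα
    · exact ⟨e, he⟩
    · exact ⟨-e, by simp [he, sum_neg_distrib]⟩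
  · obtain ⟨e, ⟨he0, he⟩ | ⟨he0, he⟩⟩ := hdecomp _ hc
    · exact .inl (funext (Fintype.linearIndependent_iffₛ.1 hli c e he) ▸ he0)
    · refine .inr fun i => ?_
      have hce : ∑ i, c i • b i = ∑ i, (-e) i • b i := by simp [he, sum_neg_distrib]
      simpa [Fintype.linearIndependent_iffₛ.1 hli c (-e) hce i] using he0 i

section Orthogonal

variable {n N : ℕ} {b : Fin N → V n} {S : Finset (Fin N)}

theorem inner_sum_smul_compl_eq_zero (hS : ∀ i ∈ S, ∀ k ∉ S, ⟪b i, b k⟫ = 0) (c : Fin N → ℝ)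
    {i : Fin N} (hi : i ∈ S) : ⟪b i, ∑ k ∈ Sᶜ, c k • b k⟫ = 0 := by
  rw [inner_sum]
  exact sum_eq_zero fun k hk => by
    rw [real_inner_smul_right, hS i hi k (mem_compl.1 hk), mul_zero]

theorem inner_sum_smul_sum_smul_compl_eq_zero (hS : ∀ i ∈ S, ∀ k ∉ S, ⟪b i, b k⟫ = 0)
    (c : Fin N → ℝ) : ⟪∑ i ∈ S, c i • b i, ∑ k ∈ Sᶜ, c k • b k⟫ = 0 := by
  rw [sum_inner]
  exact sum_eq_zero fun i hi => by
    rw [real_inner_smul_left, inner_sum_smul_compl_eq_zero hS c hi, mul_zero]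

theorem sum_smul_mem_span_image (s : Finset (Fin N)) {c : Fin N → ℝ} (hc : ∀ i ∉ s, c i = 0) :
    ∑ i, c i • b i ∈ Submodule.span ℝ (b '' s) := by
  rw [← sum_subset (subset_univ s) fun i _ hi => by rw [hc i hi, zero_smul]]
  exact Submodule.sum_mem _ fun i hi =>
    Submodule.smul_mem _ _ (Submodule.subset_span ⟨i, hi, rfl⟩)

end Orthogonal

namespace IsSimpleBasis

variable {n N : ℕ} {Φ : Finset (V n)} {b : Fin N → V n}

theorem inner_nonpos (hΦ : IsCrystRS Φ) (hB : IsSimpleBasis Φ b) {i k : Fin N} (hik : i ≠ k) :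
    ⟪b i, b k⟫ ≤ 0 := by
  by_contra! hpos
  have hlt : ⟪b i, b k⟫ < ‖b i‖ * ‖b k‖ := by
    refine inner_lt_norm_mul_iff_real.2 fun h => hΦ.ne_zero _ (hB.mem k) (norm_eq_zero.1 ?_)
    have hsum : ∑ j, (‖b k‖ • Pi.single i 1 - ‖b i‖ • Pi.single k 1 : Fin N → ℝ) j • b j = 0 := by
      simp [sub_smul, sum_sub_distrib, Pi.single_apply, h]
    simpa [hik] using Fintype.linearIndependent_iff.1 hB.linearIndependent _ hsum i
  have hmem := hΦ.sub_mem_of_inner_pos (hB.mem i) (hB.mem k) hpos hlt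
  have hsum : ∑ j, (Pi.single k 1 - Pi.single i 1 : Fin N → ℝ) j • b j = b k - b i := by
    simp [sub_smul, sum_sub_distrib, Pi.single_apply]
  rcases hB.nonneg_or_nonpos _ (hsum ▸ hmem) with h | h
  · exact absurd (h i) (by simp [hik])
  · exact absurd (h k) (by simp [hik.symm])

variable {S : Finset (Fin N)}

theorem exists_sub_mem (hΦ : IsCrystRS Φ) (hB : IsSimpleBasis Φ b)
    (hS : ∀ i ∈ S, ∀ k ∉ S, ⟪b i, b k⟫ = 0) {c : Fin N → ℝ} (hc : 0 ≤ c)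
    (hγ : ∑ i, c i • b i ∈ Φ) (hin : ∃ i ∈ S, c i ≠ 0) (hout : ∃ k ∉ S, c k ≠ 0) :
    ∃ i ∈ S, ∑ j, c j • b j - b i ∈ Φ := by
  set w := ∑ i ∈ S, c i • b i
  set v := ∑ k ∈ Sᶜ, c k • b k
  have hwv : ⟪w, v⟫ = 0 := inner_sum_smul_sum_smul_compl_eq_zero hS c
  have hw : w ≠ 0 := by
    obtain ⟨i, hi, hci⟩ := hin
    exact fun h => hci (linearIndependent_iff'.1 hB.linearIndependent S c h i hi)
  have hv : v ≠ 0 := by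
    obtain ⟨k, hk, hck⟩ := hout
    exact fun h => hck (linearIndependent_iff'.1 hB.linearIndependent Sᶜ c h k (mem_compl.2 hk))
  -- `⟪w, w⟫ = ∑ i ∈ S, c i * ⟪b i, w⟫` is positive, so some term is
  obtain ⟨i, hi, hbw⟩ : ∃ i ∈ S, 0 < ⟪b i, w⟫ := by
    by_contra! h
    refine hw (real_inner_self_nonpos.1 ?_)
    rw [sum_inner]
    exact sum_nonpos fun i hi => by
      rw [real_inner_smul_left]
      exact mul_nonpos_of_nonneg_of_nonpos (hc i) (h i hi)
  have hγ_eq : ∑ j, c j • b j = w + v := (sum_add_sum_compl S _).symm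
  have hbγ : ⟪b i, ∑ j, c j • b j⟫ = ⟪b i, w⟫ := by
    rw [hγ_eq, inner_add_right, inner_sum_smul_compl_eq_zero hS c hi, add_zero]
  have hwγ : ‖w‖ < ‖∑ j, c j • b j‖ := by
    refine lt_of_pow_lt_pow_left₀ 2 (norm_nonneg _) ?_
    rw [hγ_eq, norm_add_sq_real, hwv]
    have := norm_pos_iff.2 hv
    nlinarith
  refine ⟨i, hi, hΦ.sub_mem_of_inner_pos (hB.mem i) hγ (hbγ ▸ hbw) ?_⟩
  calc ⟪b i, ∑ j, c j • b j⟫ = ⟪b i, w⟫ := hbγ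
    _ ≤ ‖b i‖ * ‖w‖ := real_inner_le_norm _ _
    _ < ‖b i‖ * ‖∑ j, c j • b j‖ :=
      mul_lt_mul_of_pos_left hwγ (norm_pos_iff.2 (hΦ.ne_zero _ (hB.mem i)))

theorem sum_compl_mem (hΦ : IsCrystRS Φ) (hB : IsSimpleBasis Φ b)
    (hS : ∀ i ∈ S, ∀ k ∉ S, ⟪b i, b k⟫ = 0) {c : Fin N → ℝ} (hc : 0 ≤ c)
    (hγ : ∑ i, c i • b i ∈ Φ) (hout : ∃ k ∉ S, c k ≠ 0) : ∑ k ∈ Sᶜ, c k • b k ∈ Φ := by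
  have of_eq_zero (c : Fin N → ℝ) (hγ : ∑ i, c i • b i ∈ Φ) (hS : ∀ i ∈ S, c i = 0) :
      ∑ k ∈ Sᶜ, c k • b k ∈ Φ := by
    rwa [sum_subset (subset_univ _) fun i _ hi => by rw [hS i (by simpa using hi), zero_smul]]
  -- induction on an integer bound for `∑ i ∈ S, c i`, which drops by one at each step
  obtain ⟨M, hM⟩ : ∃ M : ℕ, ∑ i ∈ S, c i ≤ M := ⟨_, Nat.le_ceil _⟩
  induction M generalizing c with
  | zero =>
    refine of_eq_zero c hγ ((sum_eq_zero_iff_of_nonneg fun i _ => hc i).1 ?_)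
    exact le_antisymm (by exact_mod_cast hM) (sum_nonneg fun i _ => hc i)
  | succ M ih =>
    by_cases hzero : ∀ i ∈ S, c i = 0
    · exact of_eq_zero c hγ hzero
    push Not at hzero
    obtain ⟨i, hi, hmem⟩ := exists_sub_mem hΦ hB hS hc hγ hzero hout
    set c' := c - Pi.single i 1
    have hc'_compl : ∀ k ∉ S, c' k = c k := fun k hk => by
      simp [c', (ne_of_mem_of_not_mem hi hk).symm]
    have hγ' : ∑ j, c' j • b j ∈ Φ := by
      simpa [c', sub_smul, sum_sub_distrib] using hmem
    obtain ⟨k, hk, hck⟩ := hout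
    have hc' : 0 ≤ c' := (hB.nonneg_or_nonpos c' hγ').resolve_right fun h =>
      hck (le_antisymm (hc'_compl k hk ▸ h k) (hc k))
    have hM' : ∑ j ∈ S, c' j ≤ M := by
      simp only [c', Pi.sub_apply, sum_sub_distrib, sum_pi_single', hi, if_true]
      push_cast at hM
      linarith
    have := ih hc' hγ' ⟨k, hk, hc'_compl k hk ▸ hck⟩ hM'
    rwa [sum_congr rfl fun k hk => by rw [hc'_compl k (mem_compl.1 hk)]] at this

theorem eq_zero_on_or_eq_zero_on_compl (hΦ : IsCrystRS Φ) (hB : IsSimpleBasis Φ b)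
    (hS : ∀ i ∈ S, ∀ k ∉ S, ⟪b i, b k⟫ = 0) {c : Fin N → ℝ} (hc : 0 ≤ c)
    (hγ : ∑ i, c i • b i ∈ Φ) : (∀ i ∈ S, c i = 0) ∨ ∀ k ∉ S, c k = 0 := by
  by_contra! h
  obtain ⟨⟨i, hi, hci⟩, ⟨k, hk, hck⟩⟩ := h
  set w := ∑ i ∈ S, c i • b i
  set v := ∑ k ∈ Sᶜ, c k • b k
  have hv : v ∈ Φ := sum_compl_mem hΦ hB hS hc hγ ⟨k, hk, hck⟩
  have hγ_eq : ∑ j, c j • b j = w + v := (sum_add_sum_compl S _).symm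
  have hrefl : ⟪∑ j, c j • b j, covec v⟫ = 2 := by
    rw [IsCrystRS.inner_covec_right, hγ_eq, inner_add_right, real_inner_comm w v,
      inner_sum_smul_sum_smul_compl_eq_zero hS c, zero_add,
      div_mul_cancel₀ _ (real_inner_self_pos.2 (hΦ.ne_zero v hv)).ne']
  set g : Fin N → ℝ := fun j => if j ∈ S then c j else -c j
  have hg : ∑ j, g j • b j = w - v := by
    rw [← sum_add_sum_compl S, sub_eq_add_neg, ← sum_neg_distrib]
    congr 1 <;> refine sum_congr rfl fun j hj => ?_
    · simp [g, hj]
    · simp [g, mem_compl.1 hj]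
  -- the reflection of `w + v` in the root `v` is `w - v`, whose coefficients have mixed signs
  have hmem : ∑ j, g j • b j ∈ Φ := by
    have := hΦ.refl_mem v hv _ hγ
    rwa [hrefl, hγ_eq, two_smul, add_sub_add_right_eq_sub, ← hg] at this
  rcases hB.nonneg_or_nonpos g hmem with hg0 | hg0
  · have := hg0 k
    simp only [g, if_neg hk, Pi.zero_apply, Left.nonneg_neg_iff] at this
    exact hck (le_antisymm this (hc k))
  · have := hg0 i
    simp only [g, if_pos hi, Pi.zero_apply] at this
    exact hci (le_antisymm this (hc i))

theorem eq_empty_or_eq_univ (hΦ : IsCrystRS Φ) (hB : IsSimpleBasis Φ b)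
    (hS : ∀ i ∈ S, ∀ k ∉ S, ⟪b i, b k⟫ = 0) : S = ∅ ∨ S = univ := by
  set U := Submodule.span ℝ (b '' S)
  set U' := Submodule.span ℝ (b '' ↑Sᶜ)
  have hUU' : U ⟂ U' := Submodule.isOrtho_span.2 <| by
    rintro _ ⟨i, hi, rfl⟩ _ ⟨k, hk, rfl⟩
    exact hS i hi k (by simpa using hk)
  have hpos (c : Fin N → ℝ) (hc : 0 ≤ c) (hγ : ∑ i, c i • b i ∈ Φ) :
      ∑ i, c i • b i ∈ U ∨ ∑ i, c i • b i ∈ U' := by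
    rcases hB.eq_zero_on_or_eq_zero_on_compl hΦ hS hc hγ with h | h
    · exact .inr (sum_smul_mem_span_image _ fun i hi => h i (by simpa using hi))
    · exact .inl (sum_smul_mem_span_image S h)
  have hroot (β : V n) (hβ : β ∈ Φ) : β ∈ U ∨ β ∈ U' := by
    obtain ⟨c, rfl⟩ := hB.exists_eq_sum β hβ
    rcases hB.nonneg_or_nonpos c hβ with hc | hc
    · exact hpos c hc hβ
    · have hneg : ∑ i, (-c) i • b i = -∑ i, c i • b i := by simp [sum_neg_distrib]
      simpa only [hneg, Submodule.neg_mem_iff] using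
        hpos (-c) (neg_nonneg.2 hc) (hneg ▸ hΦ.neg_mem _ hβ)
  have horth : ∀ α ∈ (Φ : Set (V n)) ∩ U, ∀ β ∈ (Φ : Set (V n)) \ ((Φ : Set (V n)) ∩ U),
      ⟪α, β⟫ = 0 := by
    rintro α ⟨-, hαU⟩ β ⟨hβ, hβs⟩
    exact hUU'.inner_eq hαU ((hroot β hβ).resolve_left fun hβU => hβs ⟨hβ, hβU⟩)
  rcases hΦ.irreducible ((Φ : Set (V n)) ∩ U) Set.inter_subset_left horth with h | h
  · refine .inl (eq_empty_of_forall_notMem fun i hi => ?_)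
    have : b i ∈ (Φ : Set (V n)) ∩ U := ⟨hB.mem i, Submodule.subset_span ⟨i, hi, rfl⟩⟩
    simp [h] at this
  · refine .inr (eq_univ_of_forall fun k => ?_)
    by_contra hk
    have hkU : b k ∈ U := (h.symm.subset (mem_coe.2 (hB.mem k))).2
    have hkU' : b k ∈ U' := Submodule.subset_span ⟨k, by simpa using hk, rfl⟩
    exact hΦ.ne_zero _ (hB.mem k) (inner_self_eq_zero.1 (hUU'.inner_eq hkU hkU'))

end IsSimpleBasis

theorem inverse_cartan_pos_general {n N : ℕ} [DecidableEq (V n)] (Φ Δ : Finset (V n)) (hΦ : IsCrystRS Φ)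
    (hΔ : IsSimpleSys Φ Δ) (b : Fin N → V n) (hbinj : Function.Injective b)
    (hbΔ : Finset.image b Finset.univ = Δ)
    (C : Matrix (Fin N) (Fin N) ℝ) (hC : ∀ i j, C i j = ⟪covec (b i), b j⟫) :
    ∀ i j, 0 < C⁻¹ i j := by
  intro i j
  have hB := hΔ.isSimpleBasis hbinj hbΔ
  have hb (a : Fin N) : b a ≠ 0 := hΦ.ne_zero _ (hB.mem a)
  have hCG : C = Matrix.diagonal (fun a => 2 / ⟪b a, b a⟫) * Matrix.gram ℝ b := by
    ext a k
    rw [hC, covec, real_inner_smul_left, Matrix.diagonal_mul, Matrix.gram_apply]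
  have hD : (Matrix.diagonal fun a => 2 / ⟪b a, b a⟫)⁻¹ =
      Matrix.diagonal fun a => ⟪b a, b a⟫ / 2 := by
    refine Matrix.inv_eq_left_inv ?_
    rw [Matrix.diagonal_mul_diagonal, ← Matrix.diagonal_one]
    congr 1 with a
    simp [hb a]
  have hG : 0 < (Matrix.gram ℝ b)⁻¹ i j :=
    (Matrix.posDef_gram_of_linearIndependent hB.linearIndependent).inv_apply_pos
      (fun a k hak => hB.inner_nonpos hΦ hak) (fun S hS => hB.eq_empty_or_eq_univ hΦ hS) i j
  rw [hCG, Matrix.mul_inv_rev, hD, Matrix.mul_diagonal]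
  exact mul_pos hG (half_pos (real_inner_self_pos.2 (hb j)))

/-- all entries of the inverse of the Cartan matrix of an irreducible
crystallographic root system are nonnegative (indeed positive). -/
theorem inverse_cartan_pos {n N : ℕ} [DecidableEq (V n)] (Φ Δ : Finset (V n)) (hΦ : IsCrystRS Φ)
    (hΔ : IsSimpleSys Φ Δ) (b : Fin N → V n) (hbinj : Function.Injective b)
    (hbΔ : Finset.image b Finset.univ = Δ)
    (C : Matrix (Fin N) (Fin N) ℝ) (hC : ∀ i j, C i j = ⟪covec (b i), b j⟫)
    (hdet : IsUnit C.det) :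
    ∀ i j, 0 < C⁻¹ i j :=
  inverse_cartan_pos_general Φ Δ hΦ hΔ b hbinj hbΔ C hC
end
end

section
/- The set of elements w of the affine Weyl group whose alcove lies in the fundamental polytope P_ℋ forms an interval [e, w_max] in the componentwise order on Shi coefficients: there is a unique maximal element w_max ∈ Alc(P_ℋ) (the alcove having the special point x = ⋂_{α∈Δ} H_{α,1} as a vertex) such that for every w ∈ Alc(P_ℋ) and every positive root α, 0 ≤ k(w,α) ≤ k(w_max, α); conversely any g with 0 ≤ k(g,α) ≤ k(w_max,α) for all α ∈ Φ⁺ lies in Alc(P_ℋ). -/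
open scoped RealInnerProductSpace BigOperators

noncomputable section

/-- The alcove region determined by a tuple of Shi coefficients. -/
def shiRegion {n : ℕ} (Plus : Finset (V n)) (k : V n → ℤ) : Set (V n) :=
  {x : V n | ∀ α ∈ Plus, (k α : ℝ) < ⟪x, covec α⟫ ∧ ⟪x, covec α⟫ < k α + 1}

/-- An admitted vector: the Shi coefficient tuple of an alcove lying in the fundamental
polytope `P_ℋ`, i.e. a genuine alcove whose coordinates on the simple roots vanish. -/
def IsAdmitted {n : ℕ} (Δ Plus : Finset (V n)) (k : V n → ℤ) : Prop :=
  (shiRegion Plus k).Nonempty ∧ ∀ α ∈ Δ, k α = 0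

/-- the alcoves contained in `P_ℋ` form an interval `[e, w_max]` for the
componentwise order on Shi coefficients: there is a (unique) maximal element `w_max`, the
alcove having the special point `x = ⋂_{α∈Δ} H_{α,1}` as a vertex, such that every alcove in
`P_ℋ` has coefficients between `0` and those of `w_max`, and conversely every alcove whose
coefficients lie between `0` and those of `w_max` is in `P_ℋ`. -/
theorem polytope_interval {n : ℕ} (Φ Δ Plus : Finset (V n)) (hΦ : IsCrystRS Φ)
    (hΔ : IsSimpleSys Φ Δ) (hPlus : ∀ α, α ∈ Plus ↔ α ∈ Φ ∧ IsPosRoot Δ α)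
    (x : V n) (hx : ∀ α ∈ Δ, ⟪x, covec α⟫ = 1) :
    ∃ kmax : V n → ℤ, IsAdmitted Δ Plus kmax ∧
      x ∈ closure (shiRegion Plus kmax) ∧
      (∀ k : V n → ℤ, IsAdmitted Δ Plus k → ∀ α ∈ Plus, 0 ≤ k α ∧ k α ≤ kmax α) ∧
      (∀ g : V n → ℤ, (shiRegion Plus g).Nonempty →
        (∀ α ∈ Plus, 0 ≤ g α ∧ g α ≤ kmax α) → IsAdmitted Δ Plus g) := by
  classical
  have hnorm : ∀ α ∈ Φ, (0:ℝ) < ⟪α, α⟫ := by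
    intro α hα
    rw [real_inner_self_eq_norm_sq]
    exact pow_pos (norm_pos_iff.mpr (hΦ.ne_zero α hα)) 2
  have hcov : ∀ (y α : V n), ⟪y, covec α⟫ = 2 / ⟪α, α⟫ * ⟪y, α⟫ := by
    intro y α
    simp only [covec]
    exact real_inner_smul_right y α _
  have cancel1 : ∀ a b : ℝ, b ≠ 0 → 2 / b * a = 1 → a = b / 2 := by
    intro a b hb h
    field_simp at h
    linarith
  have cancel2 : ∀ a b : ℝ, b ≠ 0 → (2 / b * a) * (b / 2) = a := by
    intro a b hb
    field_simp
  have hxd : ∀ d ∈ Δ, ⟪x, d⟫ = ⟪d, d⟫ / 2 := by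
    intro d hd
    have h1 := hx d hd
    rw [hcov] at h1
    have h2 := hnorm d (hΔ.subset hd)
    exact cancel1 _ _ h2.ne' h1
  have hΔPlus : ∀ d ∈ Δ, d ∈ Plus := by
    intro d hd
    rw [hPlus]
    refine ⟨hΔ.subset hd, fun v => if v = d then 1 else 0, fun e _ => by
      dsimp only; split_ifs <;> norm_num, ?_⟩
    symm
    simp [ite_smul, Finset.sum_ite_eq', hd]
  have key : ∀ α ∈ Plus, ∀ y : V n,
      (∀ d ∈ Δ, 0 < ⟪y, d⟫ ∧ ⟪y, d⟫ < ⟪x, d⟫) →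
      0 < ⟪y, α⟫ ∧ ⟪y, α⟫ < ⟪x, α⟫ := by
    intro α hα y hy
    obtain ⟨hαΦ, c, hc, hdec⟩ := (hPlus α).mp hα
    have hne : ∃ d ∈ Δ, 0 < c d := by
      by_contra h
      push_neg at h
      apply hΦ.ne_zero α hαΦ
      rw [hdec]
      refine Finset.sum_eq_zero fun d hd => ?_
      have h0 : c d = 0 := le_antisymm (h d hd) (hc d hd)
      rw [h0, zero_smul]
    obtain ⟨d₀, hd₀, hcd₀⟩ := hne
    have hyα : ∀ z : V n, ⟪z, α⟫ = ∑ d ∈ Δ, c d * ⟪z, d⟫ := by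
      intro z
      rw [hdec, inner_sum]
      exact Finset.sum_congr rfl fun d _ => real_inner_smul_right z d (c d)
    constructor
    · rw [hyα y]
      exact Finset.sum_pos' (fun d hd => mul_nonneg (hc d hd) (hy d hd).1.le)
        ⟨d₀, hd₀, mul_pos hcd₀ (hy d₀ hd₀).1⟩
    · rw [hyα y, hyα x]
      exact Finset.sum_lt_sum
        (fun d hd => mul_le_mul_of_nonneg_left (hy d hd).2.le (hc d hd))
        ⟨d₀, hd₀, (mul_lt_mul_iff_right₀ hcd₀).mpr (hy d₀ hd₀).2⟩
  have hhalf : ∀ d ∈ Δ, 0 < ⟪(2:ℝ)⁻¹ • x, d⟫ ∧ ⟪(2:ℝ)⁻¹ • x, d⟫ < ⟪x, d⟫ := by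
    intro d hd
    have h2 := hnorm d (hΔ.subset hd)
    have h1 : (0:ℝ) < ⟪x, d⟫ := by rw [hxd d hd]; linarith
    rw [real_inner_smul_left]
    constructor <;> nlinarith
  have hxpos : ∀ α ∈ Plus, 0 < ⟪x, α⟫ := by
    intro α hα
    have h := key α hα ((2:ℝ)⁻¹ • x) hhalf
    exact lt_trans h.1 h.2
  have hHpos : ∀ α ∈ Plus, 0 < ⟪x, covec α⟫ := by
    intro α hα
    have hαΦ := ((hPlus α).mp hα).1
    rw [hcov]
    exact mul_pos (div_pos two_pos (hnorm α hαΦ)) (hxpos α hα)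
  have hceil : ∀ α : V n, ((⌈⟪x, covec α⟫⌉:ℝ) - 1) < ⟪x, covec α⟫ := by
    intro α
    have := Int.ceil_lt_add_one (⟪x, covec α⟫)
    linarith
  have hkΔ : ∀ d ∈ Δ, ⌈⟪x, covec d⟫⌉ - 1 = 0 := by
    intro d hd
    rw [hx d hd]
    norm_num
  -- existence of a margin t₀
  have hex : ∃ t₀ : ℝ, 0 < t₀ ∧ ∀ t : ℝ, 0 < t → t ≤ t₀ →
      (1 - t) • x ∈ shiRegion Plus (fun α => ⌈⟪x, covec α⟫⌉ - 1) := by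
    set f : V n → ℝ := fun α =>
      (⟪x, covec α⟫ - ((⌈⟪x, covec α⟫⌉:ℝ) - 1)) / ⟪x, covec α⟫ with hf
    set s : Finset ℝ := insert (1/2 : ℝ) (Plus.image f) with hs
    have hsne : s.Nonempty := ⟨1/2, Finset.mem_insert_self _ _⟩
    have hpos : ∀ r ∈ s, 0 < r := by
      intro r hr
      rcases Finset.mem_insert.mp hr with h | h
      · rw [h]; norm_num
      · obtain ⟨α, hα, rfl⟩ := Finset.mem_image.mp h
        exact div_pos (by linarith [hceil α]) (hHpos α hα)
    have hmin_pos : 0 < s.min' hsne := hpos _ (s.min'_mem hsne)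
    refine ⟨s.min' hsne / 2, by linarith, ?_⟩
    intro t ht htle α hα
    have hle_half : s.min' hsne ≤ 1/2 := s.min'_le _ (Finset.mem_insert_self _ _)
    have htf : t < f α := by
      have h1 : s.min' hsne ≤ f α :=
        s.min'_le _ (Finset.mem_insert_of_mem (Finset.mem_image_of_mem f hα))
      linarith
    have hHα := hHpos α hα
    have hmul : t * ⟪x, covec α⟫ < f α * ⟪x, covec α⟫ :=
      mul_lt_mul_of_pos_right htf hHα
    have hfH : f α * ⟪x, covec α⟫ = ⟪x, covec α⟫ - ((⌈⟪x, covec α⟫⌉:ℝ) - 1) := by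
      simp only [hf]
      exact div_mul_cancel₀ _ (hHpos α hα).ne'
    have hval : ⟪(1 - t) • x, covec α⟫ = (1 - t) * ⟪x, covec α⟫ :=
      real_inner_smul_left x (covec α) (1 - t)
    have hub := Int.le_ceil (⟪x, covec α⟫)
    constructor
    · push_cast
      rw [hval]
      nlinarith
    · push_cast
      rw [hval]
      nlinarith
  obtain ⟨t₀, ht₀, hmem⟩ := hex
  refine ⟨fun α => ⌈⟪x, covec α⟫⌉ - 1, ⟨⟨(1 - t₀) • x, hmem t₀ ht₀ le_rfl⟩, hkΔ⟩, ?_, ?_, ?_⟩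
  · -- x in closure
    rw [Metric.mem_closure_iff]
    intro ε hε
    set t := min t₀ (ε / (‖x‖ + 1)) with htdef
    have hx1 : (0:ℝ) < ‖x‖ + 1 := by positivity
    have htpos : 0 < t := lt_min ht₀ (by positivity)
    refine ⟨(1 - t) • x, hmem t htpos (min_le_left _ _), ?_⟩
    have hdiff : x - (1 - t) • x = t • x := by
      rw [sub_smul, one_smul]
      abel
    rw [dist_eq_norm, hdiff, norm_smul, Real.norm_eq_abs, abs_of_pos htpos]
    have h2 : t ≤ ε / (‖x‖ + 1) := min_le_right _ _
    have h3 : ε / (‖x‖ + 1) * ‖x‖ < ε := by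
      rw [div_mul_eq_mul_div, div_lt_iff₀ hx1]
      nlinarith [norm_nonneg x]
    calc t * ‖x‖ ≤ ε / (‖x‖ + 1) * ‖x‖ := mul_le_mul_of_nonneg_right h2 (norm_nonneg x)
      _ < ε := h3
  · -- every admitted k is between 0 and kmax
    intro k hk α hα
    obtain ⟨⟨y, hy⟩, hk0⟩ := hk
    have hyd : ∀ d ∈ Δ, 0 < ⟪y, d⟫ ∧ ⟪y, d⟫ < ⟪x, d⟫ := by
      intro d hd
      have h := hy d (hΔPlus d hd)
      rw [hk0 d hd, hcov y d] at h
      push_cast at h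
      have hdd := hnorm d (hΔ.subset hd)
      have e1 : ⟪y, d⟫ = (2 / ⟪d, d⟫ * ⟪y, d⟫) * (⟪d, d⟫ / 2) :=
        (cancel2 _ _ hdd.ne').symm
      constructor
      · rw [e1]
        exact mul_pos h.1 (by positivity)
      · rw [hxd d hd, e1]
        have := mul_lt_mul_of_pos_right h.2 (show (0:ℝ) < ⟪d, d⟫ / 2 by positivity)
        linarith
    have hy2 := key α hα y hyd
    have hregα := hy α hα
    have hαΦ := ((hPlus α).mp hα).1
    have hq : (0:ℝ) < 2 / ⟪α, α⟫ := div_pos two_pos (hnorm α hαΦ)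
    have hyc1 : 0 < ⟪y, covec α⟫ := by
      rw [hcov]; exact mul_pos hq hy2.1
    have hyc2 : ⟪y, covec α⟫ < ⟪x, covec α⟫ := by
      rw [hcov y α, hcov x α]
      exact (mul_lt_mul_iff_right₀ hq).mpr hy2.2
    constructor
    · have h1 : (-1:ℝ) < (k α : ℝ) := by linarith [hregα.2, hyc1]
      have h2 : (-1:ℤ) < k α := by exact_mod_cast h1
      omega
    · have h5 : (k α : ℝ) < ⟪x, covec α⟫ := lt_trans hregα.1 hyc2
      have h6 : k α < ⌈⟪x, covec α⟫⌉ := Int.lt_ceil.mpr h5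
      show k α ≤ ⌈⟪x, covec α⟫⌉ - 1
      omega
  · -- converse
    intro g hgne hgb
    refine ⟨hgne, fun d hd => ?_⟩
    have h : 0 ≤ g d ∧ g d ≤ ⌈⟪x, covec d⟫⌉ - 1 := hgb d (hΔPlus d hd)
    have h0 := hkΔ d hd
    omega
end
end
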